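/- Let ω > 0 and Υ = x_0 + v ∈ A_{n+1} with x_0 > 0. Then ∫_0^∞ t^{Υ-1} e^{-itω} dt = Γ(Υ)/(iω)^Υ, where t^{Υ-1} for t > 0 and (iω)^Υ are defined via z^Υ := z^{x_0 - 1}(cos(|v| log z) + (v/|v|) sin(|v| log z)) using the principal logarithm, and Γ(Υ) is the hypercomplex Gamma function. -/

import Mathlib

open MeasureTheory Filter Topology Complex

namespace HypercomplexGammaAux

open Set

lemma integrable_aux {σ : ℝ} (hσ : -1 < σ) {b : ℝ} (hb : 0 < b) :
    IntegrableOn (fun t : ℝ => t ^ σ * Real.exp (-b * t)) (Ioi 0) := by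
  have h := integrableOn_rpow_mul_exp_neg_mul_rpow hσ zero_lt_one hb
  refine h.congr_fun (fun t ht => ?_) measurableSet_Ioi
  simp only [Real.rpow_one]

lemma measurable_aux (s z : ℂ) :
    AEStronglyMeasurable (fun t : ℝ => (t:ℂ) ^ (s-1) * Complex.exp (-z*t))
      (volume.restrict (Ioi 0)) := by
  apply ContinuousOn.aestronglyMeasurable ?_ measurableSet_Ioi
  apply ContinuousOn.mul
  · intro t ht
    exact (Complex.continuousAt_ofReal_cpow_const t (s-1)
      (Or.inr (ne_of_gt ht))).continuousWithinAt
  · exact (Continuous.continuousOn (by fun_prop))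

lemma norm_aux {s z : ℂ} {t : ℝ} (ht : 0 < t) :
    ‖(t:ℂ) ^ (s-1) * Complex.exp (-z*t)‖ = t ^ (s.re - 1) * Real.exp (-z.re * t) := by
  rw [norm_mul,
    Complex.norm_cpow_eq_rpow_re_of_pos ht, Complex.norm_exp]
  rw [show (s-1).re = s.re - 1 by simp, show (-z*(t:ℂ)).re = -z.re * t by simp]

lemma integrableOn_key {s z : ℂ} (hs : 0 < s.re) (hz : 0 < z.re) :
    IntegrableOn (fun t : ℝ => (t:ℂ) ^ (s-1) * Complex.exp (-z*t)) (Ioi 0) := by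
  refine (integrable_aux (by linarith : (-1:ℝ) < s.re - 1) hz).mono' (measurable_aux s z) ?_
  filter_upwards [ae_restrict_mem measurableSet_Ioi] with t ht
  rw [norm_aux ht]

lemma key {s : ℂ} (hs : 0 < s.re) : ∀ z : ℂ, 0 < z.re →
    ∫ t in Ioi (0:ℝ), (t:ℂ) ^ (s-1) * Complex.exp (-z*t) = Complex.Gamma s / z ^ s := by
  set F : ℂ → ℂ := fun z => ∫ t in Ioi (0:ℝ), (t:ℂ) ^ (s-1) * Complex.exp (-z*t) with hF
  set G : ℂ → ℂ := fun z => Complex.Gamma s / z ^ s with hG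
  set U : Set ℂ := {z : ℂ | 0 < z.re} with hU
  have hUo : IsOpen U := isOpen_lt continuous_const Complex.continuous_re
  have hder : ∀ z₀ ∈ U, HasDerivAt F
      (∫ t in Ioi (0:ℝ), ((t:ℂ) ^ (s-1) * Complex.exp (-z₀*t)) * (-(t:ℂ))) z₀ := by
    intro z₀ hz₀
    have hz₀' : 0 < z₀.re := hz₀
    have hε : 0 < z₀.re / 2 := by linarith
    have h := hasDerivAt_integral_of_dominated_loc_of_deriv_le
      (μ := volume.restrict (Ioi (0:ℝ)))
      (F := fun z (t : ℝ) => (t:ℂ) ^ (s-1) * Complex.exp (-z*t))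
      (F' := fun z (t : ℝ) => ((t:ℂ) ^ (s-1) * Complex.exp (-z*t)) * (-(t:ℂ)))
      (x₀ := z₀)
      (bound := fun t : ℝ => t ^ s.re * Real.exp (-(z₀.re/2) * t))
      (Metric.ball_mem_nhds z₀ hε)
      (Eventually.of_forall fun z => measurable_aux s z)
      (integrableOn_key hs hz₀')
      ((measurable_aux s z₀).mul (Continuous.aestronglyMeasurable (by fun_prop)))
      ?_ ?_ ?_
    · exact h.2
    · filter_upwards [ae_restrict_mem measurableSet_Ioi] with t ht
      intro z hz
      have hzre : z₀.re / 2 ≤ z.re := by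
        have h1 : |z.re - z₀.re| ≤ ‖z - z₀‖ := by
          simpa using Complex.abs_re_le_norm (z - z₀)
        rw [Metric.mem_ball, Complex.dist_eq] at hz
        have := abs_le.mp h1
        linarith [this.1, hz.le]
      rw [norm_mul, norm_aux ht]
      have htne : (t:ℝ) ≠ 0 := ht.ne'
      have hnt : ‖(-(t:ℂ))‖ = t := by
        simp [abs_of_pos (show (0:ℝ) < t from ht), le_of_lt (show (0:ℝ) < t from ht)]
      rw [hnt]
      have h2 : t ^ (s.re - 1) * Real.exp (-z.re * t) * t
          = t ^ s.re * Real.exp (-z.re * t) := by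
        rw [mul_right_comm, ← Real.rpow_add_one htne, sub_add_cancel]
      rw [h2]
      have hle : Real.exp (-z.re * t) ≤ Real.exp (-(z₀.re/2) * t) :=
        Real.exp_le_exp.mpr (by nlinarith [mem_Ioi.mp ht, hzre])
      exact mul_le_mul_of_nonneg_left hle (Real.rpow_nonneg ht.le _)
    · exact integrable_aux (by linarith : (-1:ℝ) < s.re) hε
    · filter_upwards [ae_restrict_mem measurableSet_Ioi] with t ht
      intro z hz
      have h1 : HasDerivAt (fun z : ℂ => -z * (t:ℂ)) (-(t:ℂ)) z := by
        simpa using ((hasDerivAt_id z).neg.mul_const (t:ℂ))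
      have h2 := (h1.cexp).const_mul ((t:ℂ) ^ (s-1))
      refine h2.congr_deriv ?_
      ring
  have hFan : AnalyticOnNhd ℂ F U :=
    DifferentiableOn.analyticOnNhd
      (fun z hz => (hder z hz).differentiableAt.differentiableWithinAt) hUo
  have hGan : AnalyticOnNhd ℂ G U := by
    refine DifferentiableOn.analyticOnNhd (fun z hz => ?_) hUo
    have hz' : 0 < z.re := hz
    have hzne : z ≠ 0 := fun h => by simp [h] at hz'
    have h1 : DifferentiableAt ℂ (fun z : ℂ => z ^ s) z :=
      differentiableAt_id.cpow (differentiableAt_const s)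
        (Complex.mem_slitPlane_iff.mpr (Or.inl hz'))
    have hne : z ^ s ≠ 0 := by
      simp [Complex.cpow_eq_zero_iff, hzne]
    exact ((differentiableAt_const (Complex.Gamma s)).div h1 hne).differentiableWithinAt
  have hUpre : IsPreconnected U := (convex_halfSpace_re_gt 0).isPreconnected
  have h1U : (1:ℂ) ∈ U := by simp [hU]
  have hreal : ∀ r : ℝ, 0 < r → F (r:ℂ) = G (r:ℂ) := by
    intro r hr
    have h := integral_cpow_mul_exp_neg_mul_Ioi hs hr
    have harg : (r:ℂ).arg ≠ Real.pi := by
      rw [Complex.arg_ofReal_of_nonneg hr.le]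
      exact Ne.symm Real.pi_ne_zero
    have h2 : F (r:ℂ) = ∫ t in Ioi (0:ℝ), (t:ℂ) ^ (s-1) * Complex.exp (-((r:ℂ)*t)) := by
      rw [hF]
      simp_rw [neg_mul]
    rw [h2, h, hG]
    rw [one_div, Complex.inv_cpow _ _ harg, ← div_eq_inv_mul]
  have hseq : Tendsto (fun n : ℕ => ((1 + 1/(n+1) : ℝ) : ℂ)) atTop (𝓝[≠] (1:ℂ)) := by
    rw [tendsto_nhdsWithin_iff]
    constructor
    · have h : Tendsto (fun n : ℕ => (1 + 1/(n+1) : ℝ)) atTop (𝓝 1) := by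
        have := tendsto_one_div_add_atTop_nhds_zero_nat (𝕜 := ℝ)
        simpa using tendsto_const_nhds.add this
      have := (Complex.continuous_ofReal.tendsto 1).comp h
      simpa [Function.comp_def] using this
    · filter_upwards with n
      simp only [Set.mem_compl_iff, Set.mem_singleton_iff]
      intro hcon
      have : (1 + 1/(n+1) : ℝ) = 1 := by exact_mod_cast hcon
      have hpos : (0:ℝ) < 1/(n+1) := by positivity
      linarith
  have hfreq : ∃ᶠ z in 𝓝[≠] (1:ℂ), F z = G z :=
    hseq.frequently (Eventually.of_forall fun n =>
      hreal _ (by positivity)).frequently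
  have heq := hFan.eqOn_of_preconnected_of_frequently_eq hGan hUpre h1U hfreq
  intro z hz
  exact heq hz

lemma cpow_decomp {x₀ vn t : ℝ} (ht : 0 < t) :
    (t:ℂ) ^ ((x₀:ℂ) + vn*I - 1)
      = (t:ℂ) ^ ((x₀:ℂ) - 1) *
        ((Real.cos (vn * Real.log t) : ℂ) + (Real.sin (vn * Real.log t) : ℂ) * I) ∧
    (t:ℂ) ^ ((x₀:ℂ) - vn*I - 1)
      = (t:ℂ) ^ ((x₀:ℂ) - 1) *
        ((Real.cos (vn * Real.log t) : ℂ) - (Real.sin (vn * Real.log t) : ℂ) * I) := by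
  have htne : (t:ℂ) ≠ 0 := ofReal_ne_zero.mpr ht.ne'
  have hlog : Complex.log (t:ℂ) = ((Real.log t : ℝ) : ℂ) := (Complex.ofReal_log ht.le).symm
  have h1 : (t:ℂ) ^ ((vn:ℂ)*I)
      = (Real.cos (vn * Real.log t) : ℂ) + (Real.sin (vn * Real.log t) : ℂ) * I := by
    rw [Complex.cpow_def_of_ne_zero htne, hlog,
      show ((Real.log t : ℝ) : ℂ)*((vn:ℂ)*I) = ((vn * Real.log t : ℝ) : ℂ) * I by
        push_cast; ring,
      Complex.exp_mul_I, Complex.ofReal_cos, Complex.ofReal_sin]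
  have h2 : (t:ℂ) ^ (-((vn:ℂ)*I))
      = (Real.cos (vn * Real.log t) : ℂ) - (Real.sin (vn * Real.log t) : ℂ) * I := by
    rw [Complex.cpow_def_of_ne_zero htne, hlog,
      show ((Real.log t : ℝ) : ℂ)*(-((vn:ℂ)*I)) = (-(vn * Real.log t : ℝ) : ℂ) * I by
        push_cast; ring,
      Complex.exp_mul_I, Complex.cos_neg, Complex.sin_neg, Complex.ofReal_cos,
      Complex.ofReal_sin]
    ring
  constructor
  · rw [show (x₀:ℂ) + vn*I - 1 = ((x₀:ℂ) - 1) + (vn:ℂ)*I by ring,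
      Complex.cpow_add _ _ htne, h1]
  · rw [show (x₀:ℂ) - vn*I - 1 = ((x₀:ℂ) - 1) + -((vn:ℂ)*I) by ring,
      Complex.cpow_add _ _ htne, h2]

end HypercomplexGammaAux

/-- Let `ω > 0` and `Υ = x₀ + v ∈ A_{n+1}` with `x₀ > 0`, `|v| = vn`. Then
`∫_0^∞ t^{Υ-1} e^{-itω} dt = Γ(Υ)/(iω)^Υ`,
where `t^{Υ-1} = t^{x₀-1}(cos(|v| log t) + (v/|v|) sin(|v| log t))`, the improper
oscillatory integral is interpreted as the limit of the regularized integrals with factor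
`e^{-εt}` as `ε → 0⁺`, and `Γ(Υ)/(iω)^Υ = χ₋(v) Γ(w)/(iω)^w + χ₊(v) Γ(w̄)/(iω)^{w̄}`
with `w = x₀ + i·vn`; componentwise (in the basis `{1, v/|v|}` of paravectors) this says:
the scalar part of the integral converges to `(Γ(w)/(iω)^w + Γ(w̄)/(iω)^{w̄})/2` and the
`v/|v|`-coefficient converges to `(Γ(w)/(iω)^w - Γ(w̄)/(iω)^{w̄})/(2i)`. -/
theorem hypercomplex_gamma_integral (ω x₀ vn : ℝ) (hω : 0 < ω) (h₀ : 0 < x₀)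
    (hv : 0 < vn) :
    Tendsto
      (fun ε : ℝ => ∫ t in Set.Ioi (0:ℝ),
        (t : ℂ) ^ ((x₀ : ℂ) - 1) * (Real.cos (vn * Real.log t) : ℂ) *
          Complex.exp (-((ε : ℂ) + I * ω) * t))
      (𝓝[>] 0)
      (𝓝 ((Complex.Gamma ((x₀ : ℂ) + vn * I) / (I * ω) ^ ((x₀ : ℂ) + vn * I) +
            Complex.Gamma ((x₀ : ℂ) - vn * I) / (I * ω) ^ ((x₀ : ℂ) - vn * I)) / 2)) ∧
    Tendsto
      (fun ε : ℝ => ∫ t in Set.Ioi (0:ℝ),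
        (t : ℂ) ^ ((x₀ : ℂ) - 1) * (Real.sin (vn * Real.log t) : ℂ) *
          Complex.exp (-((ε : ℂ) + I * ω) * t))
      (𝓝[>] 0)
      (𝓝 ((Complex.Gamma ((x₀ : ℂ) + vn * I) / (I * ω) ^ ((x₀ : ℂ) + vn * I) -
            Complex.Gamma ((x₀ : ℂ) - vn * I) / (I * ω) ^ ((x₀ : ℂ) - vn * I)) /
          (2 * I))) := by
  open HypercomplexGammaAux in
  set w : ℂ := (x₀:ℂ) + vn * I with hw
  set wb : ℂ := (x₀:ℂ) - vn * I with hwb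
  have hwre : 0 < w.re := by simp [hw, h₀]
  have hwbre : 0 < wb.re := by simp [hwb, h₀]
  -- exact value of the regularized integrals
  have main : ∀ ε : ℝ, 0 < ε →
      ((∫ t in Set.Ioi (0:ℝ),
          (t : ℂ) ^ ((x₀ : ℂ) - 1) * (Real.cos (vn * Real.log t) : ℂ) *
            Complex.exp (-((ε : ℂ) + I * ω) * t))
        = (Complex.Gamma w / ((ε:ℂ) + I * ω) ^ w
            + Complex.Gamma wb / ((ε:ℂ) + I * ω) ^ wb) / 2) ∧
      ((∫ t in Set.Ioi (0:ℝ),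
          (t : ℂ) ^ ((x₀ : ℂ) - 1) * (Real.sin (vn * Real.log t) : ℂ) *
            Complex.exp (-((ε : ℂ) + I * ω) * t))
        = (Complex.Gamma w / ((ε:ℂ) + I * ω) ^ w
            - Complex.Gamma wb / ((ε:ℂ) + I * ω) ^ wb) / (2 * I)) := by
    intro ε hε
    set z : ℂ := (ε:ℂ) + I * ω with hz
    have hzre : 0 < z.re := by simp [hz, hε]
    have hi1 := integrableOn_key hwre hzre
    have hi2 := integrableOn_key hwbre hzre
    have hk1 := key hwre z hzre
    have hk2 := key hwbre z hzre
    constructor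
    · have hcong : ∫ t in Set.Ioi (0:ℝ),
          (t : ℂ) ^ ((x₀ : ℂ) - 1) * (Real.cos (vn * Real.log t) : ℂ) *
            Complex.exp (-z * t)
          = ∫ t in Set.Ioi (0:ℝ),
            ((t:ℂ) ^ (w-1) * Complex.exp (-z*t) + (t:ℂ) ^ (wb-1) * Complex.exp (-z*t)) / 2 := by
        refine MeasureTheory.setIntegral_congr_fun measurableSet_Ioi (fun t ht => ?_)
        have hd := cpow_decomp (x₀ := x₀) (vn := vn) (Set.mem_Ioi.mp ht)
        rw [hw, hwb, hd.1, hd.2]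
        ring
      rw [hcong, MeasureTheory.integral_div, MeasureTheory.integral_add hi1 hi2, hk1, hk2]
    · have hcong : ∫ t in Set.Ioi (0:ℝ),
          (t : ℂ) ^ ((x₀ : ℂ) - 1) * (Real.sin (vn * Real.log t) : ℂ) *
            Complex.exp (-z * t)
          = ∫ t in Set.Ioi (0:ℝ),
            ((t:ℂ) ^ (w-1) * Complex.exp (-z*t) - (t:ℂ) ^ (wb-1) * Complex.exp (-z*t)) / (2*I) := by
        refine MeasureTheory.setIntegral_congr_fun measurableSet_Ioi (fun t ht => ?_)
        have hd := cpow_decomp (x₀ := x₀) (vn := vn) (Set.mem_Ioi.mp ht)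
        rw [hw, hwb, hd.1, hd.2, eq_div_iff (by simp [Complex.I_ne_zero] : (2*I:ℂ) ≠ 0)]
        ring
      rw [hcong, MeasureTheory.integral_div, MeasureTheory.integral_sub hi1 hi2, hk1, hk2]
  -- limit as ε → 0⁺
  have hzt : Tendsto (fun ε : ℝ => (ε:ℂ) + I * ω) (𝓝[>] 0) (𝓝 (I * ω)) := by
    have hc : Continuous fun ε : ℝ => (ε:ℂ) + I * ω := by fun_prop
    have h2 : Tendsto (fun ε : ℝ => (ε:ℂ) + I * ω) (𝓝[>] 0) (𝓝 ((0:ℝ) + I * ω)) :=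
      (hc.tendsto 0).mono_left (nhdsWithin_le_nhds : 𝓝[>] (0:ℝ) ≤ 𝓝 0)
    simpa using h2
  have hslit : (I * (ω:ℂ)) ∈ Complex.slitPlane :=
    Complex.mem_slitPlane_iff.mpr (Or.inr (by simp [hω.ne']))
  have hIωne : (I * (ω:ℂ)) ≠ 0 := by
    simp [Complex.I_ne_zero, hω.ne']
  have hc1 : Tendsto (fun ε : ℝ => ((ε:ℂ) + I * ω) ^ w) (𝓝[>] 0) (𝓝 ((I * ω) ^ w)) :=
    (continuousAt_cpow_const hslit).tendsto.comp hzt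
  have hc2 : Tendsto (fun ε : ℝ => ((ε:ℂ) + I * ω) ^ wb) (𝓝[>] 0) (𝓝 ((I * ω) ^ wb)) :=
    (continuousAt_cpow_const hslit).tendsto.comp hzt
  have hne1 : (I * (ω:ℂ)) ^ w ≠ 0 := by
    simp [Complex.cpow_eq_zero_iff, hIωne]
  have hne2 : (I * (ω:ℂ)) ^ wb ≠ 0 := by
    simp [Complex.cpow_eq_zero_iff, hIωne]
  have ht1 : Tendsto (fun ε : ℝ => Complex.Gamma w / ((ε:ℂ) + I * ω) ^ w) (𝓝[>] 0)
      (𝓝 (Complex.Gamma w / (I * ω) ^ w)) :=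
    tendsto_const_nhds.div hc1 hne1
  have ht2 : Tendsto (fun ε : ℝ => Complex.Gamma wb / ((ε:ℂ) + I * ω) ^ wb) (𝓝[>] 0)
      (𝓝 (Complex.Gamma wb / (I * ω) ^ wb)) :=
    tendsto_const_nhds.div hc2 hne2
  constructor
  · refine Tendsto.congr' ?_ ((ht1.add ht2).div_const 2)
    filter_upwards [self_mem_nhdsWithin] with ε hε
    exact ((main ε hε).1).symm
  · refine Tendsto.congr' ?_ ((ht1.sub ht2).div_const (2 * I))
    filter_upwards [self_mem_nhdsWithin] with ε hε
    exact ((main ε hε).2).symm
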